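/- arXiv:2409.04049 — 4 statements merged into one kernel-verified Lean document; each statement's English description precedes it below -/
import Mathlib

section
/- In the setting of the previous statement, if g = ∇H_γ^{DR}(y) = 0, then x₁ = x₂ = ⋯ = x_m and each x_i minimizes the function x ↦ ∑_{i=1}^m f_i(x) + (λ/2)‖x‖². -/
set_option maxHeartbeats 1000000


noncomputable section
open scoped RealInnerProductSpace BigOperators

/-- Property 1, second part: if the gradient of the Douglas–Rachford envelope vanishes,
then all local models agree and each solves the original regularized sum problem. -/
theorem stmt6 {d m : ℕ} (hm : 1 ≤ m)
    (f : Fin m → EuclideanSpace ℝ (Fin d) → ℝ)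
    (L₁ : ℝ) (hL₁ : 0 < L₁)
    (hdiff : ∀ i, Differentiable ℝ (f i))
    (hsc : ∀ i, StrongConvexOn Set.univ L₁ (f i))
    (γ lam τ : ℝ) (hγ : 0 < γ) (hlam : 0 < lam) (hτ : τ = m * γ / (m * γ + lam))
    (y x g : Fin m → EuclideanSpace ℝ (Fin d))
    (yhat xhat : EuclideanSpace ℝ (Fin d))
    (hyhat : yhat = (m : ℝ)⁻¹ • ∑ j, y j)
    (hxhat : xhat = (m : ℝ)⁻¹ • ∑ j, x j)
    (hx : ∀ i, ∀ z : EuclideanSpace ℝ (Fin d),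
      f i (x i) + ⟪y i - (2 * τ) • yhat, x i⟫ + γ / 2 * ‖x i‖ ^ 2 ≤
        f i z + ⟪y i - (2 * τ) • yhat, z⟫ + γ / 2 * ‖z‖ ^ 2)
    (hg : ∀ i, g i = (τ / γ - 2 * τ ^ 2 / γ) • yhat - x i + (2 * τ) • xhat)
    (hg0 : ∀ i, g i = 0) :
    (∀ i j, x i = x j) ∧
    (∀ i, ∀ z : EuclideanSpace ℝ (Fin d),
      (∑ j, f j (x i)) + lam / 2 * ‖x i‖ ^ 2 ≤ (∑ j, f j z) + lam / 2 * ‖z‖ ^ 2) := by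
  have hm0 : (0:ℝ) < m := by exact_mod_cast hm
  have hden : (0:ℝ) < m * γ + lam := by positivity
  have hτγ : τ * (m * γ + lam) = m * γ := by
    rw [hτ]; field_simp
  have hτpos : 0 < τ := by rw [hτ]; positivity
  have hτne : τ ≠ 0 := ne_of_gt hτpos
  -- all x i are equal
  have h1 : ∀ i, x i = (τ / γ - 2 * τ ^ 2 / γ) • yhat + (2 * τ) • xhat := by
    intro i
    have h := (hg i).symm.trans (hg0 i)
    have h2 : x i - ((τ / γ - 2 * τ ^ 2 / γ) • yhat + (2 * τ) • xhat) = 0 := by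
      have hswap : x i - ((τ / γ - 2 * τ ^ 2 / γ) • yhat + (2 * τ) • xhat)
          = -((τ / γ - 2 * τ ^ 2 / γ) • yhat - x i + (2 * τ) • xhat) := by module
      rw [hswap, h, neg_zero]
    exact sub_eq_zero.mp h2
  have heq : ∀ i j, x i = x j := fun i j => (h1 i).trans (h1 j).symm
  have i₀ : Fin m := ⟨0, hm⟩
  -- xhat equals the common value
  have hsumx : ∑ j, x j = (m:ℝ) • x i₀ := by
    rw [Finset.sum_congr rfl (fun j _ => heq j i₀), Finset.sum_const, Finset.card_univ,
      Fintype.card_fin, Nat.cast_smul_eq_nsmul ℝ]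
  have hxhatX : xhat = x i₀ := by
    rw [hxhat, hsumx, smul_smul, inv_mul_cancel₀ (ne_of_gt hm0), one_smul]
  have hysum : ∑ j, y j = (m:ℝ) • yhat := by
    rw [hyhat, smul_smul, mul_inv_cancel₀ (ne_of_gt hm0), one_smul]
  -- key relation between yhat and the common value
  have hrel : (1 - 2*τ) • x i₀ = (τ / γ - 2 * τ ^ 2 / γ) • yhat := by
    have h := h1 i₀
    rw [hxhatX] at h
    rw [sub_smul, one_smul, sub_eq_iff_eq_add]
    exact h
  have s1 : (m:ℝ)*γ/τ*(1-2*τ) = lam - m*γ := by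
    field_simp
    linear_combination -hτγ
  have s2 : (m:ℝ)*γ/τ*(τ/γ - 2*τ^2/γ) = (m:ℝ)*(1-2*τ) := by
    field_simp
  have hkey : ((m:ℝ) * (1 - 2*τ)) • yhat = (lam - m*γ) • x i₀ := by
    have h := congrArg (fun v : EuclideanSpace ℝ (Fin d) => ((m:ℝ)*γ/τ) • v) hrel
    simp only [smul_smul] at h
    rw [s1, s2] at h
    exact h.symm
  -- the per-agent optimality with x i replaced by x i₀
  have hx' : ∀ i, ∀ w : EuclideanSpace ℝ (Fin d),
      f i (x i₀) + ⟪y i - (2 * τ) • yhat, x i₀⟫ + γ / 2 * ‖x i₀‖ ^ 2 ≤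
        f i w + ⟪y i - (2 * τ) • yhat, w⟫ + γ / 2 * ‖w‖ ^ 2 := by
    intro i w
    rw [heq i₀ i]
    exact hx i w
  have hinner : ∀ v : EuclideanSpace ℝ (Fin d),
      (∑ i, ⟪y i - (2*τ) • yhat, v⟫) = (lam - m*γ) * ⟪x i₀, v⟫ := by
    intro v
    rw [← sum_inner]
    have hsu : (∑ i, (y i - (2*τ) • yhat)) = (lam - m*γ) • x i₀ := by
      rw [Finset.sum_sub_distrib, Finset.sum_const, Finset.card_univ, Fintype.card_fin,
        hysum, ← hkey, ← Nat.cast_smul_eq_nsmul ℝ, smul_smul, ← sub_smul]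
      congr 1; ring
    rw [hsu, real_inner_smul_left]
  -- master summed inequality
  have master : ∀ w : EuclideanSpace ℝ (Fin d),
      (∑ j, f j (x i₀)) + (lam - m*γ) * ⟪x i₀, x i₀⟫ + (m:ℝ) * (γ/2 * ‖x i₀‖^2)
      ≤ (∑ j, f j w) + (lam - m*γ) * ⟪x i₀, w⟫ + (m:ℝ) * (γ/2 * ‖w‖^2) := by
    intro w
    have hs := Finset.sum_le_sum (fun i (_ : i ∈ Finset.univ) => hx' i w)
    simp only [Finset.sum_add_distrib, hinner, Finset.sum_const, Finset.card_univ,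
      Fintype.card_fin, nsmul_eq_mul] at hs
    linarith [hs]
  have hconv : ∀ i, ConvexOn ℝ Set.univ (f i) := fun i =>
    strongConvexOn_zero.mp ((hsc i).mono hL₁.le)
  -- first order inequality for the sum
  have hgradineq : ∀ z : EuclideanSpace ℝ (Fin d),
      (∑ j, f j (x i₀)) ≤ (∑ j, f j z) + lam * ⟪x i₀, z - x i₀⟫ := by
    intro z
    have step : ∀ t : ℝ, 0 < t → t ≤ 1 →
        (∑ j, f j (x i₀)) ≤ (∑ j, f j z) + lam * ⟪x i₀, z - x i₀⟫
          + t * ((m:ℝ)*(γ/2)*‖z - x i₀‖^2) := by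
      intro t ht0 ht1
      have hw := master ((1-t) • x i₀ + t • z)
      have ha : (0:ℝ) ≤ 1 - t := by linarith
      have hab : (1 - t) + t = 1 := by ring
      have hcv1 : ∀ i : Fin m, f i ((1-t) • x i₀ + t • z)
          ≤ (1-t) * f i (x i₀) + t * f i z :=
        fun i => (hconv i).2 (Set.mem_univ _) (Set.mem_univ _) ha ht0.le hab
      have hcv : (∑ j, f j ((1-t) • x i₀ + t • z))
          ≤ (1-t) * (∑ j, f j (x i₀)) + t * (∑ j, f j z) := by
        calc (∑ j, f j ((1-t) • x i₀ + t • z))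
            ≤ ∑ i, ((1-t) * f i (x i₀) + t * f i z) :=
              Finset.sum_le_sum (fun i _ => hcv1 i)
          _ = (1-t) * (∑ j, f j (x i₀)) + t * (∑ j, f j z) := by
              rw [Finset.sum_add_distrib, ← Finset.mul_sum, ← Finset.mul_sum]
      have e1 : ⟪x i₀, (1-t) • x i₀ + t • z⟫ = ⟪x i₀, x i₀⟫ + t * ⟪x i₀, z - x i₀⟫ := by
        simp only [inner_add_right, real_inner_smul_right, inner_sub_right]
        ring
      have e2 : ‖(1-t) • x i₀ + t • z‖^2
          = ‖x i₀‖^2 + 2*t*⟪x i₀, z - x i₀⟫ + t^2 * ‖z - x i₀‖^2 := by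
        have hid : (1-t) • x i₀ + t • z = x i₀ + t • (z - x i₀) := by
          rw [smul_sub, sub_smul, one_smul]; abel
        rw [hid, norm_add_sq_real, real_inner_smul_right, norm_smul]
        rw [mul_pow, Real.norm_eq_abs, sq_abs]
        ring
      rw [e1, e2] at hw
      have h3 : t * (∑ j, f j (x i₀)) ≤ t * ((∑ j, f j z) + lam * ⟪x i₀, z - x i₀⟫
          + t * ((m:ℝ)*(γ/2)*‖z - x i₀‖^2)) := by nlinarith [hw, hcv]
      exact le_of_mul_le_mul_left h3 ht0
    refine le_of_forall_pos_le_add ?_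
    intro ε hε
    set K := (m:ℝ)*(γ/2)*‖z - x i₀‖^2 with hKdef
    have hK : 0 ≤ K := by rw [hKdef]; positivity
    have ht0 : 0 < min 1 (ε / (K+1)) := lt_min one_pos (by positivity)
    have hstep := step _ ht0 (min_le_left _ _)
    have htK : min 1 (ε/(K+1)) * K ≤ ε := by
      calc min 1 (ε/(K+1)) * K ≤ (ε/(K+1)) * K :=
            mul_le_mul_of_nonneg_right (min_le_right _ _) hK
        _ ≤ ε := by
            rw [div_mul_eq_mul_div, div_le_iff₀ (by linarith)]
            nlinarith
    linarith
  refine ⟨heq, ?_⟩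
  intro i z
  rw [heq i i₀]
  have h := hgradineq z
  rw [inner_sub_right, real_inner_self_eq_norm_sq] at h
  have hsq : ‖z - x i₀‖^2 = ‖z‖^2 - 2*⟪z, x i₀⟫ + ‖x i₀‖^2 := norm_sub_sq_real z (x i₀)
  have hcomm : ⟪z, x i₀⟫ = ⟪x i₀, z⟫ := real_inner_comm _ _
  have hpos : 0 ≤ lam * ‖z - x i₀‖^2 := mul_nonneg hlam.le (sq_nonneg _)
  rw [hsq, hcomm] at hpos
  linarith
end
end

section
/- Let H be a symmetric md×md matrix of the form H = γ⁻¹(I − 2τQ)((I − τQ) − S(I − 2τQ)) where Q is the block-averaging projection, τ = 1/4, and S is a symmetric matrix commuting structure such that (1/(1+γ/L₁))I ⪯ S ⪯ (1/(1+γ/L₂))I with 0 < L₁ ≤ L₂. Then for every z, γ·zᵀHz ≤ ‖z‖², i.e., H ⪯ (1/γ)I. -/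
/-!
With `p = (I − 2τQ)z`, the symmetry of `I − 2τQ` gives
`γ⟪Hz, z⟫ = ⟪(I − τQ)z, p⟫ − ⟪Sp, p⟫`. Since `Q` is an orthogonal projection,
`⟪(I − aQ)z, (I − bQ)z⟫ = ‖z‖² − (a + b − ab)‖Qz‖²`, and `a + b − ab = 5/8 ≥ 0` for `τ = 1/4`.
The lower bound on `S` makes `⟪Sp, p⟫ ≥ 0`, so `γ⟪Hz, z⟫ ≤ ‖z‖²`.
-/

open scoped RealInnerProductSpace

section SymmetricIdempotent

variable {E : Type*} [NormedAddCommGroup E] [InnerProductSpace ℝ E] {Q : E →L[ℝ] E}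

theorem inner_apply_self_eq_norm_sq_of_symm_idem (hsym : ∀ z w, ⟪Q z, w⟫ = ⟪z, Q w⟫)
    (hidem : Q * Q = Q) (z : E) : ⟪Q z, z⟫ = ‖Q z‖ ^ 2 := by
  have hQQ : Q (Q z) = Q z := congrArg (fun T : E →L[ℝ] E => T z) hidem
  rw [← real_inner_self_eq_norm_sq, hsym z (Q z), hQQ, real_inner_comm]

theorem inner_sub_smul_apply_sub_smul_apply (hsym : ∀ z w, ⟪Q z, w⟫ = ⟪z, Q w⟫)
    (hidem : Q * Q = Q) (a b : ℝ) (z : E) :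
    ⟪z - a • Q z, z - b • Q z⟫ = ‖z‖ ^ 2 - (a + b - a * b) * ⟪Q z, z⟫ := by
  have hQz : ⟪z, Q z⟫ = ‖Q z‖ ^ 2 := by
    rw [real_inner_comm, inner_apply_self_eq_norm_sq_of_symm_idem hsym hidem]
  simp only [inner_sub_left, inner_sub_right, real_inner_smul_left, real_inner_smul_right,
    real_inner_self_eq_norm_sq, real_inner_comm z (Q z), hQz]
  ring

/-- With `a = τ`, `b = 2τ` the operator on the left is `γH`. -/
theorem inner_drHessian_apply_self (hsym : ∀ z w, ⟪Q z, w⟫ = ⟪z, Q w⟫) (hidem : Q * Q = Q)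
    (S : E →L[ℝ] E) (a b : ℝ) (z : E) :
    ⟪((1 - b • Q) * ((1 - a • Q) - S * (1 - b • Q))) z, z⟫ =
      ‖z‖ ^ 2 - (a + b - a * b) * ⟪Q z, z⟫ - ⟪S (z - b • Q z), z - b • Q z⟫ := by
  have hsymP : ∀ w, ⟪(1 - b • Q) w, z⟫ = ⟪w, z - b • Q z⟫ := fun w => by
    simp only [sub_apply, smul_apply, one_apply_eq_self, inner_sub_left, inner_sub_right,
      real_inner_smul_left, real_inner_smul_right, hsym]
  rw [mul_apply_eq_comp, hsymP, ← inner_sub_smul_apply_sub_smul_apply hsym hidem,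
    ← inner_sub_left]
  simp only [sub_apply, mul_apply_eq_comp, smul_apply, one_apply_eq_self]

end SymmetricIdempotent

theorem stmt8_general {n : ℕ}
    (Q S H : EuclideanSpace ℝ (Fin n) →L[ℝ] EuclideanSpace ℝ (Fin n))
    (γ L₁ τ : ℝ) (hγ : 0 < γ) (hL₁ : 0 < L₁) (hτ : τ = 1 / 4)
    (hQsym : ∀ z w, ⟪Q z, w⟫ = ⟪z, Q w⟫) (hQproj : Q * Q = Q)
    (hSlb : ∀ z, (1 / (1 + γ / L₁)) * ‖z‖ ^ 2 ≤ ⟪S z, z⟫)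
    (hH : H = γ⁻¹ • (((1 : EuclideanSpace ℝ (Fin n) →L[ℝ] EuclideanSpace ℝ (Fin n)) -
        (2 * τ) • Q) * ((1 - τ • Q) - S * (1 - (2 * τ) • Q)))) :
    ∀ z, γ * ⟪H z, z⟫ ≤ ‖z‖ ^ 2 := by
  intro z
  have hS : 0 ≤ ⟪S (z - (2 * τ) • Q z), z - (2 * τ) • Q z⟫ := (hSlb _).trans' (by positivity)
  have hQ : 0 ≤ ⟪Q z, z⟫ := by
    rw [inner_apply_self_eq_norm_sq_of_symm_idem hQsym hQproj]
    positivity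
  have hform : γ * ⟪H z, z⟫ =
      ‖z‖ ^ 2 - 5 / 8 * ⟪Q z, z⟫ - ⟪S (z - (2 * τ) • Q z), z - (2 * τ) • Q z⟫ := by
    rw [hH, smul_apply, real_inner_smul_left, ← mul_assoc, mul_inv_cancel₀ hγ.ne', one_mul,
      inner_drHessian_apply_self hQsym hQproj, hτ]
    norm_num
  linarith

/-- Upper bound on the Hessian of the Douglas–Rachford envelope: with `τ = 1/4`,
`Q` a symmetric projection and `(1/(1+γ/L₁))I ⪯ S ⪯ (1/(1+γ/L₂))I`, the operator
`H = γ⁻¹(I − 2τQ)((I − τQ) − S(I − 2τQ))` satisfies `γ·zᵀHz ≤ ‖z‖²`, i.e. `H ⪯ (1/γ)I`. -/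
theorem stmt8 {n : ℕ}
    (Q S H : EuclideanSpace ℝ (Fin n) →L[ℝ] EuclideanSpace ℝ (Fin n))
    (γ L₁ L₂ τ : ℝ) (hγ : 0 < γ) (hL₁ : 0 < L₁) (hL : L₁ ≤ L₂) (hτ : τ = 1 / 4)
    (hQsym : ∀ z w, ⟪Q z, w⟫ = ⟪z, Q w⟫) (hQproj : Q * Q = Q)
    (hSsym : ∀ z w, ⟪S z, w⟫ = ⟪z, S w⟫)
    (hSlb : ∀ z, (1 / (1 + γ / L₁)) * ‖z‖ ^ 2 ≤ ⟪S z, z⟫)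
    (hSub : ∀ z, ⟪S z, z⟫ ≤ (1 / (1 + γ / L₂)) * ‖z‖ ^ 2)
    (hH : H = γ⁻¹ • (((1 : EuclideanSpace ℝ (Fin n) →L[ℝ] EuclideanSpace ℝ (Fin n)) -
        (2 * τ) • Q) * ((1 - τ • Q) - S * (1 - (2 * τ) • Q)))) :
    ∀ z, γ * ⟪H z, z⟫ ≤ ‖z‖ ^ 2 :=
  stmt8_general Q S H γ L₁ τ hγ hL₁ hτ hQsym hQproj hSlb hH
end

section
/- In the setting of the previous statement (τ = 1/4, same bounds on S), for every z, γ·zᵀHz ≥ min{1/8, γ/(L₂+γ)}·‖z‖², so H ⪰ min{1/(8γ), 1/(L₂+γ)}·I; in particular H is positive definite. -/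
noncomputable section
open scoped RealInnerProductSpace

lemma keyineq (m q c : ℝ) (hm : 0 ≤ m) (hq0 : 0 ≤ q) (hqm : q ≤ m)
    (hc0 : 0 ≤ c) (hc1 : c ≤ 1) :
    min (1/8) (1 - c) * m ≤ m - 5/8 * q - c * (m - 3/4 * q) := by
  rcases le_total c (5/6) with h | h
  · have h1 : min (1/8 : ℝ) (1-c) ≤ 1/8 := min_le_left _ _
    nlinarith [mul_nonneg (sub_nonneg.2 hqm) (sub_nonneg.2 h), mul_nonneg hm (sub_nonneg.2 hc1)]
  · have h2 : min (1/8 : ℝ) (1-c) ≤ 1 - c := min_le_right _ _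
    nlinarith [mul_nonneg hq0 (sub_nonneg.2 h)]

/-- Lower bound on the Hessian of the Douglas–Rachford envelope: with `τ = 1/4` and the
same bounds on `S`, `γ·zᵀHz ≥ min{1/8, γ/(L₂+γ)}‖z‖²`, so `H ⪰ min{1/(8γ), 1/(L₂+γ)}·I`;
in particular `H` is positive definite. -/
theorem stmt9 {n : ℕ}
    (Q S H : EuclideanSpace ℝ (Fin n) →L[ℝ] EuclideanSpace ℝ (Fin n))
    (γ L₁ L₂ τ : ℝ) (hγ : 0 < γ) (hL₁ : 0 < L₁) (hL : L₁ ≤ L₂) (hτ : τ = 1 / 4)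
    (hQsym : ∀ z w, ⟪Q z, w⟫ = ⟪z, Q w⟫) (hQproj : Q * Q = Q)
    (hSsym : ∀ z w, ⟪S z, w⟫ = ⟪z, S w⟫)
    (hSlb : ∀ z, (1 / (1 + γ / L₁)) * ‖z‖ ^ 2 ≤ ⟪S z, z⟫)
    (hSub : ∀ z, ⟪S z, z⟫ ≤ (1 / (1 + γ / L₂)) * ‖z‖ ^ 2)
    (hH : H = γ⁻¹ • (((1 : EuclideanSpace ℝ (Fin n) →L[ℝ] EuclideanSpace ℝ (Fin n)) -
        (2 * τ) • Q) * ((1 - τ • Q) - S * (1 - (2 * τ) • Q)))) :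
    (∀ z, min (1 / 8) (γ / (L₂ + γ)) * ‖z‖ ^ 2 ≤ γ * ⟪H z, z⟫) ∧
    (∀ z, z ≠ 0 → 0 < ⟪H z, z⟫) := by
  have hL₂ : 0 < L₂ := lt_of_lt_of_le hL₁ hL
  have hP : 0 < L₂ + γ := by linarith
  set c : ℝ := 1 / (1 + γ / L₂) with hc
  have hden : 0 < 1 + γ / L₂ := by positivity
  have hc0 : 0 ≤ c := by positivity
  have hc1 : c ≤ 1 := by
    rw [hc, div_le_one hden]
    nlinarith [div_nonneg hγ.le hL₂.le]
  have h1c : 1 - c = γ / (L₂ + γ) := by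
    rw [hc]
    field_simp
    ring
  have main : ∀ z, min (1 / 8) (γ / (L₂ + γ)) * ‖z‖ ^ 2 ≤ γ * ⟪H z, z⟫ := by
    intro z
    set a := z - (1/2 : ℝ) • Q z with ha
    set w := (z - (1/4 : ℝ) • Q z) - S a with hw
    have hQQ : Q (Q z) = Q z := by
      have := congrArg (fun f => f z) hQproj
      simpa [ContinuousLinearMap.mul_apply] using this
    have hqQ : ⟪Q z, Q z⟫ = ⟪Q z, z⟫ := by
      calc ⟪Q z, Q z⟫ = ⟪z, Q (Q z)⟫ := hQsym _ _
        _ = ⟪z, Q z⟫ := by rw [hQQ]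
        _ = ⟪Q z, z⟫ := real_inner_comm _ _
    have hq0 : 0 ≤ ⟪Q z, z⟫ := by rw [← hqQ]; exact real_inner_self_nonneg
    have hqm : ⟪Q z, z⟫ ≤ ‖z‖ ^ 2 := by
      have hcs := real_inner_le_norm (Q z) z
      have hn : ⟪Q z, Q z⟫ = ‖Q z‖ ^ 2 := real_inner_self_eq_norm_sq _
      nlinarith [sq_nonneg (‖Q z‖ - ‖z‖)]
    have hHz : H z = γ⁻¹ • (w - (1/2 : ℝ) • Q w) := by
      rw [hH, hτ, hw, ha]
      simp [ContinuousLinearMap.mul_apply, map_sub, map_smul]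
      norm_num
      module
    have hna : ‖a‖ ^ 2 = ‖z‖ ^ 2 - 3/4 * ⟪Q z, z⟫ := by
      rw [← real_inner_self_eq_norm_sq, ha]
      simp only [inner_sub_left, inner_sub_right, real_inner_smul_left, real_inner_smul_right]
      rw [hqQ, real_inner_comm z (Q z), real_inner_self_eq_norm_sq]
      ring
    have hval : γ * ⟪H z, z⟫ = ‖z‖ ^ 2 - 5/8 * ⟪Q z, z⟫ - ⟪S a, a⟫ := by
      rw [hHz, real_inner_smul_left, ← mul_assoc, mul_inv_cancel₀ hγ.ne', one_mul]
      have hQw : ⟪Q w, z⟫ = ⟪w, Q z⟫ := hQsym _ _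
      rw [inner_sub_left, real_inner_smul_left, hQw]
      have : ⟪w, z⟫ - 1/2 * ⟪w, Q z⟫ = ⟪w, a⟫ := by
        rw [ha, inner_sub_right, real_inner_smul_right]
      rw [this, hw, ha]
      simp only [inner_sub_left, inner_sub_right, real_inner_smul_left, real_inner_smul_right]
      rw [hqQ, real_inner_comm z (Q z), real_inner_self_eq_norm_sq]
      ring
    have hSab : ⟪S a, a⟫ ≤ c * ‖a‖ ^ 2 := hSub a
    have hk := keyineq (‖z‖ ^ 2) (⟪Q z, z⟫) c (sq_nonneg _) hq0 hqm hc0 hc1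
    rw [h1c] at hk
    rw [hval]
    rw [hna] at hSab
    linarith
  refine ⟨main, fun z hz => ?_⟩
  have hm := main z
  have hpos : 0 < min (1 / 8) (γ / (L₂ + γ)) * ‖z‖ ^ 2 := by
    have : 0 < ‖z‖ ^ 2 := pow_pos (norm_pos_iff.mpr hz) 2
    have hmin : 0 < min (1/8 : ℝ) (γ / (L₂ + γ)) := lt_min (by norm_num) (div_pos hγ hP)
    exact mul_pos hmin this
  nlinarith
end
end

section
/- Let H : ℝ^n → ℝ be C² with ∇²H ⪯ (1/γ)I and suppose at a point y the direction p satisfies pᵀ∇H(y) > 0 and |pᵀ∇H(y) − pᵀ∇²H(ξ)p| ≤ q̃‖p‖² for all ξ on the segment [y − p, y]. If q̃ ≤ ((1−2σ)/4)·(pᵀ∇H(y))/‖p‖² for some σ ∈ (0, 1/2), then H(y − p) ≤ H(y) − σ·pᵀ∇H(y) (the Armijo condition holds with unit stepsize). -/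
noncomputable section
open scoped RealInnerProductSpace

/-- Unit-stepsize Armijo condition: if `∇²H ⪯ (1/γ)I`, `pᵀ∇H(y) > 0`, the curvature
mismatch along the segment `[y − p, y]` is at most `q̃‖p‖²`, and
`q̃ ≤ ((1−2σ)/4)·(pᵀ∇H(y))/‖p‖²` with `σ ∈ (0, 1/2)`, then
`H(y − p) ≤ H(y) − σ·pᵀ∇H(y)`. -/
theorem stmt12 {n : ℕ} (H : EuclideanSpace ℝ (Fin n) → ℝ)
    (γ σ qt : ℝ) (hγ : 0 < γ) (hσ : 0 < σ ∧ σ < 1 / 2) (hqt : 0 ≤ qt)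
    (hC2 : ContDiff ℝ 2 H)
    (hHessUB : ∀ y v, ⟪(fderiv ℝ (gradient H) y) v, v⟫ ≤ (1 / γ) * ‖v‖ ^ 2)
    (y p : EuclideanSpace ℝ (Fin n)) (hp : p ≠ 0)
    (hpg : 0 < ⟪p, gradient H y⟫)
    (hmismatch : ∀ t : ℝ, t ∈ Set.Icc (0 : ℝ) 1 →
      |⟪p, gradient H y⟫ - ⟪(fderiv ℝ (gradient H) (y - t • p)) p, p⟫| ≤ qt * ‖p‖ ^ 2)
    (hqcond : qt ≤ (1 - 2 * σ) / 4 * (⟪p, gradient H y⟫ / ‖p‖ ^ 2)) :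
    H (y - p) ≤ H y - σ * ⟪p, gradient H y⟫ := by
  classical
  set g : ℝ := ⟪p, gradient H y⟫ with hg_def
  set M : ℝ := g + qt * ‖p‖ ^ 2 with hM_def
  have hd1 : Differentiable ℝ H := hC2.differentiable (by simp)
  -- differentiability of the gradient
  have hfd : Differentiable ℝ (fderiv ℝ H) :=
    (hC2.fderiv_right (m := 1) (by norm_num)).differentiable (by simp)
  have hgrad_diff : Differentiable ℝ (gradient H) := by
    have h : (gradient H) =
        (fun L => (InnerProductSpace.toDual ℝ (EuclideanSpace ℝ (Fin n))).symm L)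
          ∘ (fderiv ℝ H) := rfl
    rw [h]
    exact ((InnerProductSpace.toDual ℝ
      (EuclideanSpace ℝ (Fin n))).symm.toContinuousLinearEquiv.differentiable).comp hfd
  -- the curve
  have hc : ∀ t : ℝ, HasDerivAt (fun t : ℝ => y - t • p) (-p) t := by
    intro t
    have h1 : HasDerivAt (fun t : ℝ => t • p) ((1:ℝ) • p) t :=
      (hasDerivAt_id t).smul_const p
    simpa using h1.const_sub y
  -- relation between fderiv and gradient
  have hfg : ∀ x v : EuclideanSpace ℝ (Fin n), fderiv ℝ H x v = ⟪gradient H x, v⟫ := by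
    intro x v
    have h : (InnerProductSpace.toDual ℝ (EuclideanSpace ℝ (Fin n))) (gradient H x)
        = fderiv ℝ H x :=
      (InnerProductSpace.toDual ℝ (EuclideanSpace ℝ (Fin n))).apply_symm_apply _
    rw [← h]
    rfl
  set φ : ℝ → ℝ := fun t => H (y - t • p) with hφ_def
  set u : ℝ → ℝ := fun t => ⟪p, gradient H (y - t • p)⟫ with hu_def
  have hφ : ∀ t : ℝ, HasDerivAt φ (-u t) t := by
    intro t
    have h1 : HasDerivAt φ (fderiv ℝ H (y - t • p) (-p)) t :=
      (hd1 (y - t • p)).hasFDerivAt.comp_hasDerivAt t (hc t)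
    have h2 : fderiv ℝ H (y - t • p) (-p) = -u t := by
      rw [hfg, inner_neg_right, real_inner_comm]
    rwa [h2] at h1
  have hu : ∀ t : ℝ, HasDerivAt u
      (-⟪(fderiv ℝ (gradient H) (y - t • p)) p, p⟫) t := by
    intro t
    have h1 : HasDerivAt (fun t : ℝ => gradient H (y - t • p))
        ((fderiv ℝ (gradient H) (y - t • p)) (-p)) t :=
      (hgrad_diff (y - t • p)).hasFDerivAt.comp_hasDerivAt (l := gradient H) t (hc t)
    have h2 := (hasDerivAt_const t p).inner ℝ h1
    rw [inner_zero_left, add_zero, map_neg, inner_neg_right, real_inner_comm] at h2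
    exact h2
  have hu0 : u 0 = g := by simp [hu_def, hg_def]
  have hnp : (0:ℝ) < ‖p‖ ^ 2 := by
    have : (0:ℝ) < ‖p‖ := norm_pos_iff.2 hp
    positivity
  -- bound on |u t - g|
  have hub : ∀ t ∈ Set.Icc (0:ℝ) 1, |u t - g| ≤ M * t := by
    have key := norm_image_sub_le_of_norm_deriv_le_segment'
      (f := u) (f' := fun t => -⟪(fderiv ℝ (gradient H) (y - t • p)) p, p⟫)
      (a := 0) (b := 1) (C := M)
      (fun t ht => (hu t).hasDerivWithinAt)
      (fun t ht => by
        have h1 := hmismatch t (Set.Ico_subset_Icc_self ht)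
        have h3 := abs_sub_abs_le_abs_sub ⟪(fderiv ℝ (gradient H) (y - t • p)) p, p⟫ g
        rw [abs_sub_comm] at h3
        have hgabs : |g| = g := abs_of_pos hpg
        have h2 : |⟪(fderiv ℝ (gradient H) (y - t • p)) p, p⟫| ≤ M := by
          rw [hM_def]; rw [hgabs] at h3; linarith
        simpa [Real.norm_eq_abs, abs_neg] using h2)
    intro t ht
    have h := key t ht
    rw [hu0] at h
    simpa [Real.norm_eq_abs] using h
  have hM0 : 0 ≤ M := by
    have h : 0 ≤ qt * ‖p‖ ^ 2 := by positivity
    rw [hM_def]; linarith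
  -- the auxiliary decreasing function
  set Φ : ℝ → ℝ := fun t => φ t + g * t - M * t ^ 2 / 2 with hΦ_def
  have hΦd : ∀ t : ℝ, HasDerivAt Φ (-u t + g - M * t) t := by
    intro t
    have hA : HasDerivAt (fun s : ℝ => g * s) g t := by
      simpa using (hasDerivAt_id t).const_mul g
    have hB : HasDerivAt (fun s : ℝ => M * s ^ 2 / 2) (M * t) t := by
      have h := ((hasDerivAt_pow 2 t).const_mul M).div_const 2
      refine h.congr_deriv ?_
      norm_num
      ring
    exact ((hφ t).add hA).sub hB
  have hΦanti : AntitoneOn Φ (Set.Icc (0:ℝ) 1) := by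
    apply antitoneOn_of_deriv_nonpos (convex_Icc 0 1)
    · exact fun t _ => ((hΦd t).differentiableAt).continuousAt.continuousWithinAt
    · exact fun t ht => ((hΦd t).differentiableAt).differentiableWithinAt
    · intro t ht
      rw [interior_Icc] at ht
      rw [(hΦd t).deriv]
      have h1 := hub t (Set.mem_Icc_of_Ioo ht)
      have h2 : g - M * t ≤ u t := by
        have h3 := abs_le.1 h1
        linarith [h3.1]
      linarith
  have hkey := hΦanti (Set.left_mem_Icc.2 zero_le_one) (Set.right_mem_Icc.2 zero_le_one)
    zero_le_one
  have hΦ0 : Φ 0 = H y := by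
    show φ 0 + g * 0 - M * 0 ^ 2 / 2 = H y
    have h0 : φ 0 = H y := by show H (y - (0:ℝ) • p) = H y; rw [zero_smul, sub_zero]
    rw [h0]; ring
  have hΦ1 : Φ 1 = H (y - p) + g - M / 2 := by
    show φ 1 + g * 1 - M * 1 ^ 2 / 2 = H (y - p) + g - M / 2
    have h0 : φ 1 = H (y - p) := by show H (y - (1:ℝ) • p) = H (y - p); rw [one_smul]
    rw [h0]; ring
  rw [hΦ0, hΦ1] at hkey
  -- final arithmetic
  have hq' : qt * ‖p‖ ^ 2 ≤ (1 - 2 * σ) / 4 * g := by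
    have h := mul_le_mul_of_nonneg_right hqcond (le_of_lt hnp)
    rw [mul_assoc, div_mul_cancel₀ g (ne_of_gt hnp)] at h
    exact h
  have hσ1 : σ < 1 / 2 := hσ.2
  have hσ0 : 0 < σ := hσ.1
  have hfin : H (y - p) ≤ H y - g + M / 2 := by linarith
  rw [hM_def] at hfin
  nlinarith [hpg, hfin, hq', mul_nonneg (by linarith : (0:ℝ) ≤ 1 - 2 * σ) hpg.le]
end
end
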